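/- arXiv:1307.5493 — 9 statements merged into one kernel-verified Lean document; each statement's English description precedes it below -/
import Mathlib

section
/- Let $\xi = e^{2\pi i/(bc)}$ for positive integers $b,c$, and let $a$ be an integer not divisible by $bc$ such that $b$ does not divide $a$ and $bc \nmid ac$. Then $\sum_{k=0}^{c-1} \frac{1}{1-\xi^{a+kb}} = \frac{c}{1-\xi^{ac}}$. -/
open Complex in
theorem stmt_2 (b c : ℕ) (hb : 0 < b) (hc : 0 < c) (a : ℤ)
    (h1 : ¬ ((b : ℤ) ∣ a)) (h2 : ¬ (((b : ℤ) * c) ∣ a * c)) :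
    ∑ k ∈ Finset.range c,
        (1 - Complex.exp (2 * Real.pi * Complex.I / ((b : ℂ) * c)) ^ (a + (k : ℤ) * b))⁻¹
      = (c : ℂ) / (1 - Complex.exp (2 * Real.pi * Complex.I / ((b : ℂ) * c)) ^ (a * c)) := by
  have hbc : (b * c : ℕ) ≠ 0 := by positivity
  have hb0 : (b : ℤ) ≠ 0 := by exact_mod_cast hb.ne'
  set ξ : ℂ := Complex.exp (2 * Real.pi * Complex.I / ((b : ℂ) * c)) with hξdef
  have hξ0 : ξ ≠ 0 := Complex.exp_ne_zero _
  have hprim : IsPrimitiveRoot ξ (b * c) := by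
    have := Complex.isPrimitiveRoot_exp (b * c) hbc
    rw [hξdef]
    convert this using 3
    push_cast
    ring
  have hone : ∀ m : ℤ, ξ ^ m = 1 ↔ ((b : ℤ) * c) ∣ m := by
    intro m
    rw [hprim.zpow_eq_one_iff_dvd m]
    push_cast
    rfl
  have hone' : ξ ^ ((b : ℤ) * c) = 1 := (hone _).mpr dvd_rfl
  have hac : ξ ^ (a * (c : ℤ)) ≠ 1 := by
    intro h
    rw [hone] at h
    exact h2 h
  have hk : ∀ k : ℕ, ξ ^ (a + (k : ℤ) * b) ≠ 1 := by
    intro k h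
    rw [hone] at h
    apply h1
    have hb' : (b : ℤ) ∣ a + (k : ℤ) * b := (dvd_mul_right _ _).trans h
    simpa using hb'.sub (dvd_mul_left (b : ℤ) (k : ℤ))
  have hne : (1 : ℂ) - ξ ^ (a * (c : ℤ)) ≠ 0 := sub_ne_zero.mpr (Ne.symm hac)
  have hwc : ∀ k : ℕ, (ξ ^ (a + (k : ℤ) * b)) ^ c = ξ ^ (a * (c : ℤ)) := by
    intro k
    rw [← zpow_natCast (ξ ^ (a + (k : ℤ) * b)) c, ← zpow_mul]
    have h : (a + (k : ℤ) * b) * c = a * c + ((b : ℤ) * c) * k := by ring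
    rw [h, zpow_add₀ hξ0, zpow_mul ξ ((b : ℤ) * c) (k : ℤ), hone', one_zpow, mul_one]
  have key : ∀ k ∈ Finset.range c,
      (1 - ξ ^ (a + (k : ℤ) * b))⁻¹
        = (∑ j ∈ Finset.range c, (ξ ^ (a + (k : ℤ) * b)) ^ j) / (1 - ξ ^ (a * (c : ℤ))) := by
    intro k _
    have hw : ξ ^ (a + (k : ℤ) * b) ≠ 1 := hk k
    have hw1 : (1 : ℂ) - ξ ^ (a + (k : ℤ) * b) ≠ 0 := sub_ne_zero.mpr (Ne.symm hw)
    have hw2 : ξ ^ (a + (k : ℤ) * b) - 1 ≠ 0 := sub_ne_zero.mpr hw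
    rw [geom_sum_eq hw, hwc k]
    field_simp
    ring
  rw [Finset.sum_congr rfl key, ← Finset.sum_div]
  congr 1
  have swap : ∑ k ∈ Finset.range c, ∑ j ∈ Finset.range c, (ξ ^ (a + (k : ℤ) * b)) ^ j
      = ∑ j ∈ Finset.range c, ∑ k ∈ Finset.range c, ξ ^ (a * j) * (ξ ^ ((b : ℤ) * j)) ^ k := by
    rw [Finset.sum_comm]
    refine Finset.sum_congr rfl fun j _ => Finset.sum_congr rfl fun k _ => ?_
    rw [← zpow_natCast (ξ ^ (a + (k : ℤ) * b)) j, ← zpow_mul,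
      ← zpow_natCast (ξ ^ ((b : ℤ) * j)) k, ← zpow_mul,
      ← zpow_add₀ hξ0]
    congr 1
    ring
  rw [swap]
  rw [Finset.sum_eq_single 0]
  · simp
  · intro j hj hj0
    have hj' : j < c := Finset.mem_range.mp hj
    have hbj : ξ ^ ((b : ℤ) * j) ≠ 1 := by
      intro h
      rw [hone] at h
      have hcj : (c : ℤ) ∣ (j : ℤ) := (mul_dvd_mul_iff_left hb0).mp h
      have : c ∣ j := by exact_mod_cast hcj
      exact hj0 (Nat.eq_zero_of_dvd_of_lt this hj')
    rw [← Finset.mul_sum, geom_sum_eq hbj]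
    have h1 : (ξ ^ ((b : ℤ) * j)) ^ c = 1 := by
      rw [← zpow_natCast _ c, ← zpow_mul]
      have h : (b : ℤ) * j * c = ((b : ℤ) * c) * j := by ring
      rw [h, zpow_mul ξ ((b : ℤ) * c) (j : ℤ), hone', one_zpow]
    rw [h1]
    simp
  · intro h
    exact absurd (Finset.mem_range.mpr hc) h
end

section
/- Let $b,c$ be positive integers, $a_1,a_2$ integers with $b \nmid a_1$, $b \nmid a_2$, $b \mid a_1+a_2$ but $bc \nmid a_1+a_2$. Then, with $\xi = e^{2\pi i/(bc)}$, $\sum_{k=0}^{c-1} \frac{1}{(1-\xi^{a_1+kb})(1-\xi^{a_2-kb})} = 0$. -/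
/-!
Write $x_k = \xi^{a_1+kb}$, $y_k = \xi^{a_2-kb}$, so that $x_k y_k = \zeta := \xi^{a_1+a_2} \ne 1$.
The identity $\frac{1}{(1-x)(1-y)} = \frac{1}{1-xy}\left(\frac{1}{1-x} + \frac{1}{1-y} - 1\right)$
splits the sum into two sums of the form $\sum_k (1 - z\omega^k)^{-1}$ with $\omega = \xi^{\pm b}$ a
primitive $c$-th root of unity; expanding each term as a geometric series gives
$\sum_k (1 - z\omega^k)^{-1} = c/(1-z^c)$. With $w_i = \xi^{a_i c}$ we have $w_1 w_2 = 1$, hence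
$\frac{1}{1-w_1} + \frac{1}{1-w_2} = 1$ and the bracket vanishes.
-/

open Finset

section

variable {K : Type*} [Field K]

lemma inv_one_sub_eq_mul_geom_sum {x : K} {n : ℕ} (hx : x ^ n ≠ 1) :
    (1 - x)⁻¹ = (1 - x ^ n)⁻¹ * ∑ j ∈ range n, x ^ j := by
  have hx1 : x ≠ 1 := by rintro rfl; exact hx (one_pow n)
  have : x - 1 ≠ 0 := sub_ne_zero.mpr hx1
  have : x ^ n - 1 ≠ 0 := sub_ne_zero.mpr hx
  rw [geom_sum_eq hx1, ← neg_sub (x ^ n), ← neg_sub x]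
  field_simp

lemma IsPrimitiveRoot.geom_sum_pow_eq_zero {ω : K} {n j : ℕ} (hω : IsPrimitiveRoot ω n)
    (hj0 : j ≠ 0) (hjn : j < n) : ∑ k ∈ range n, (ω ^ j) ^ k = 0 := by
  rw [geom_sum_eq (hω.pow_ne_one_of_pos_of_lt hj0 hjn), ← pow_mul, mul_comm, pow_mul,
    hω.pow_eq_one, one_pow, sub_self, zero_div]

lemma IsPrimitiveRoot.sum_inv_one_sub_mul_pow {ω : K} {n : ℕ} (hω : IsPrimitiveRoot ω n)
    {z : K} (hz : z ^ n ≠ 1) :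
    ∑ k ∈ range n, (1 - z * ω ^ k)⁻¹ = n * (1 - z ^ n)⁻¹ := by
  have hpow (k : ℕ) : (z * ω ^ k) ^ n = z ^ n := by
    rw [mul_pow, ← pow_mul, mul_comm k, pow_mul, hω.pow_eq_one, one_pow, mul_one]
  calc ∑ k ∈ range n, (1 - z * ω ^ k)⁻¹
      = (1 - z ^ n)⁻¹ * ∑ k ∈ range n, ∑ j ∈ range n, (z * ω ^ k) ^ j := by
        rw [mul_sum]
        exact sum_congr rfl fun k _ => by rw [inv_one_sub_eq_mul_geom_sum (hpow k ▸ hz), hpow]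
    _ = (1 - z ^ n)⁻¹ * ∑ j ∈ range n, z ^ j * ∑ k ∈ range n, (ω ^ j) ^ k := by
        rw [sum_comm]
        congr 1
        refine sum_congr rfl fun j _ => ?_
        rw [mul_sum]
        exact sum_congr rfl fun k _ => by ring
    _ = n * (1 - z ^ n)⁻¹ := by
        rw [sum_eq_single 0]
        · simp [mul_comm]
        · intro j hj hj0
          rw [hω.geom_sum_pow_eq_zero hj0 (mem_range.mp hj), mul_zero]
        · simp +contextual

lemma inv_one_sub_mul_inv_one_sub {x y : K} (hx : x ≠ 1) (hy : y ≠ 1) (hxy : x * y ≠ 1) :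
    ((1 - x) * (1 - y))⁻¹ = (1 - x * y)⁻¹ * ((1 - x)⁻¹ + (1 - y)⁻¹ - 1) := by
  have := sub_ne_zero.mpr hx.symm
  have := sub_ne_zero.mpr hy.symm
  have := sub_ne_zero.mpr hxy.symm
  field_simp
  ring

lemma inv_one_sub_add_inv_one_sub_of_mul_eq_one {x y : K} (hx : x ≠ 1) (hxy : x * y = 1) :
    (1 - x)⁻¹ + (1 - y)⁻¹ = 1 := by
  have hy : y ≠ 1 := by rintro rfl; exact hx (by simpa using hxy)
  have := sub_ne_zero.mpr hx.symm
  have := sub_ne_zero.mpr hy.symm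
  field_simp
  linear_combination -hxy

lemma IsPrimitiveRoot.sum_inv_one_sub_zpow_add_mul {ξ : K} (hξ : ξ ≠ 0) {n : ℕ} {s : ℤ}
    (hω : IsPrimitiveRoot (ξ ^ s) n) {a : ℤ} (ha : ξ ^ (a * n) ≠ 1) :
    ∑ k ∈ range n, (1 - ξ ^ (a + k * s))⁻¹ = n * (1 - ξ ^ (a * n))⁻¹ := by
  have hpow (m : ℕ) : ξ ^ (a * m) = (ξ ^ a) ^ m := by rw [zpow_mul, zpow_natCast]
  rw [hpow] at ha ⊢
  rw [← hω.sum_inv_one_sub_mul_pow ha]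
  refine sum_congr rfl fun k _ => ?_
  rw [zpow_add₀ hξ, mul_comm (k : ℤ), zpow_mul, zpow_natCast]

theorem IsPrimitiveRoot.sum_inv_one_sub_zpow_mul_one_sub_zpow_eq_zero {ξ : K} {b c : ℕ}
    (hξ : IsPrimitiveRoot ξ (b * c)) (hbc : b * c ≠ 0) {a₁ a₂ : ℤ}
    (h1 : ¬ (b : ℤ) ∣ a₁) (h2 : ¬ (b : ℤ) ∣ a₂)
    (h3 : (b : ℤ) ∣ a₁ + a₂) (h4 : ¬ (b : ℤ) * c ∣ a₁ + a₂) :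
    ∑ k ∈ range c, ((1 - ξ ^ (a₁ + k * b)) * (1 - ξ ^ (a₂ - k * b)))⁻¹ = 0 := by
  have hξ0 : ξ ≠ 0 := hξ.ne_zero hbc
  have hone (m : ℤ) : ξ ^ m = 1 ↔ (b : ℤ) * c ∣ m := by
    rw [hξ.zpow_eq_one_iff_dvd, Nat.cast_mul]
  have hne (m : ℤ) (hm : ¬ (b : ℤ) ∣ m) : ξ ^ m ≠ 1 :=
    fun h => hm (dvd_of_mul_right_dvd ((hone m).mp h))
  have hne_mul (a : ℤ) (ha : ¬ (b : ℤ) ∣ a) : ξ ^ (a * c) ≠ 1 := by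
    rw [Ne, hone, mul_dvd_mul_iff_right (by exact_mod_cast right_ne_zero_of_mul hbc)]
    exact ha
  have hω : IsPrimitiveRoot (ξ ^ (b : ℤ)) c := by
    simpa using hξ.pow (Nat.pos_of_ne_zero hbc) rfl
  have hS₁ : ∑ k ∈ range c, (1 - ξ ^ (a₁ + k * b))⁻¹ = c * (1 - ξ ^ (a₁ * c))⁻¹ :=
    hω.sum_inv_one_sub_zpow_add_mul hξ0 (hne_mul a₁ h1)
  have hS₂ : ∑ k ∈ range c, (1 - ξ ^ (a₂ - k * b))⁻¹ = c * (1 - ξ ^ (a₂ * c))⁻¹ := by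
    have hω' : IsPrimitiveRoot (ξ ^ (-(b : ℤ))) c := by rw [zpow_neg]; exact hω.inv
    simpa only [mul_neg, ← sub_eq_add_neg] using
      hω'.sum_inv_one_sub_zpow_add_mul hξ0 (hne_mul a₂ h2)
  have hterm (k : ℕ) : ((1 - ξ ^ (a₁ + k * b)) * (1 - ξ ^ (a₂ - k * b)))⁻¹
      = (1 - ξ ^ (a₁ + a₂))⁻¹ * ((1 - ξ ^ (a₁ + k * b))⁻¹ + (1 - ξ ^ (a₂ - k * b))⁻¹ - 1) := by
    have hexp : ξ ^ (a₁ + k * b) * ξ ^ (a₂ - k * b) = ξ ^ (a₁ + a₂) := by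
      rw [← zpow_add₀ hξ0]; ring_nf
    rw [inv_one_sub_mul_inv_one_sub, hexp]
    · exact hne _ fun h => h1 ((dvd_add_left (dvd_mul_left _ _)).mp h)
    · exact hne _ fun h => h2 ((dvd_sub_left (dvd_mul_left _ _)).mp h)
    · rw [hexp, Ne, hone]; exact h4
  have hsum : (1 - ξ ^ (a₁ * c))⁻¹ + (1 - ξ ^ (a₂ * c))⁻¹ = 1 := by
    refine inv_one_sub_add_inv_one_sub_of_mul_eq_one (hne_mul a₁ h1) ?_
    rw [← zpow_add₀ hξ0, ← add_mul, hone]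
    exact mul_dvd_mul_right h3 _
  rw [sum_congr rfl fun k _ => hterm k, ← mul_sum, sum_sub_distrib, sum_add_distrib, hS₁, hS₂,
    sum_const, card_range, nsmul_one, ← mul_add, hsum, mul_one, sub_self, mul_zero]

end

open Complex in
theorem stmt_3 (b c : ℕ) (hb : 0 < b) (hc : 0 < c) (a₁ a₂ : ℤ)
    (h1 : ¬ ((b : ℤ) ∣ a₁)) (h2 : ¬ ((b : ℤ) ∣ a₂))
    (h3 : (b : ℤ) ∣ a₁ + a₂) (h4 : ¬ (((b : ℤ) * c) ∣ a₁ + a₂)) :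
    ∑ k ∈ Finset.range c,
        ((1 - Complex.exp (2 * Real.pi * Complex.I / ((b : ℂ) * c)) ^ (a₁ + (k : ℤ) * b)) *
         (1 - Complex.exp (2 * Real.pi * Complex.I / ((b : ℂ) * c)) ^ (a₂ - (k : ℤ) * b)))⁻¹
      = 0 := by
  have hbc : b * c ≠ 0 := by positivity
  have hξ := Complex.isPrimitiveRoot_exp (b * c) hbc
  rw [Nat.cast_mul] at hξ
  exact hξ.sum_inv_one_sub_zpow_mul_one_sub_zpow_eq_zero hbc h1 h2 h3 h4
end

section
/- Define $r_n$ by $r_0=r_1=1$, $r_{2n+1} = 2 r_{2n} - r_{2n-1}$, $r_{2n} = 4 r_{2n-1} - r_{2n-2}$ (the case $(k,l)=(2,1)$). Then for all $n \ge 0$: $2 r_{2n+1}^2 - 4 r_{2n+1} r_{2n} + r_{2n}^2 = -1$ and $2 r_{2n+1}^2 - 4 r_{2n+1} r_{2n+2} + r_{2n+2}^2 = -1$. -/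
theorem stmt_5 (r : ℕ → ℤ) (h0 : r 0 = 1) (h1 : r 1 = 1)
    (hodd : ∀ n, r (2 * n + 3) = 2 * r (2 * n + 2) - r (2 * n + 1))
    (heven : ∀ n, r (2 * n + 2) = 4 * r (2 * n + 1) - r (2 * n)) :
    ∀ n, 2 * r (2 * n + 1) ^ 2 - 4 * r (2 * n + 1) * r (2 * n) + r (2 * n) ^ 2 = -1 ∧
      2 * r (2 * n + 1) ^ 2 - 4 * r (2 * n + 1) * r (2 * n + 2) + r (2 * n + 2) ^ 2 = -1 := by
  intro n
  induction n with
  | zero =>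
    have h2 := heven 0
    norm_num at h2
    rw [show 2*0+1 = 1 from rfl, show 2*0 = 0 from rfl, show 2*0+2 = 2 from rfl, h0, h1, h2]
    rw [h0, h1] at h2 ⊢; constructor <;> norm_num [h2]
  | succ k ih =>
    obtain ⟨_, ih2⟩ := ih
    have ho := hodd k
    have he := heven (k + 1)
    have key : 2 * k + 3 = 2 * (k + 1) + 1 := by ring
    have key2 : 2 * k + 2 = 2 * (k + 1) := by ring
    rw [key, key2] at ho
    rw [key2] at ih2
    have key3 : 2 * (k + 1) + 2 = 2 * (k + 1) + 2 := rfl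
    constructor
    · rw [ho]; nlinarith [ih2]
    · rw [he, ho]; nlinarith [ih2]
end

section
/- Define $r_n$ by $r_0=r_1=1$, $r_{2n+1} = 2 r_{2n} - r_{2n-1}$, $r_{2n} = 3 r_{2n-1} - r_{2n-2}$ (the case $(k,l)=(3,2)$). Then for all $n \ge 0$: $3 r_{2n+1}^2 - 6 r_{2n+1} r_{2n} + 2 r_{2n}^2 = -1$ and $3 r_{2n+1}^2 - 6 r_{2n+1} r_{2n+2} + 2 r_{2n+2}^2 = -1$. -/
theorem stmt_6 (r : ℕ → ℤ) (h0 : r 0 = 1) (h1 : r 1 = 1)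
    (hodd : ∀ n, r (2 * n + 3) = 2 * r (2 * n + 2) - r (2 * n + 1))
    (heven : ∀ n, r (2 * n + 2) = 3 * r (2 * n + 1) - r (2 * n)) :
    ∀ n, 3 * r (2 * n + 1) ^ 2 - 6 * r (2 * n + 1) * r (2 * n) + 2 * r (2 * n) ^ 2 = -1 ∧
      3 * r (2 * n + 1) ^ 2 - 6 * r (2 * n + 1) * r (2 * n + 2) + 2 * r (2 * n + 2) ^ 2 = -1 := by
  intro n
  induction n with
  | zero =>
    have h2 := heven 0
    simp only [h0, h1] at *
    constructor <;> nlinarith [h2]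
  | succ k ih =>
    obtain ⟨ih1, ih2⟩ := ih
    have ho := hodd k
    have he : r (2 * k + 4) = 3 * r (2 * k + 3) - r (2 * k + 2) := by
      have := heven (k + 1)
      have a : 2 * (k + 1) + 2 = 2 * k + 4 := by ring
      have b : 2 * (k + 1) + 1 = 2 * k + 3 := by ring
      have c : 2 * (k + 1) = 2 * k + 2 := by ring
      rw [a, b, c] at this
      exact this
    have e1 : 2 * (k + 1) + 1 = 2 * k + 3 := by ring
    have e2 : 2 * (k + 1) = 2 * k + 2 := by ring
    have e3 : 2 * (k + 1) + 2 = 2 * k + 4 := by ring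
    rw [e1, e2, show 2 * k + 2 + 2 = 2 * k + 4 from by ring]
    constructor
    · rw [ho]; linear_combination ih2
    · rw [he, ho]; linear_combination ih2
end

section
/- Let $(k,l) \in \{(1,1),(2,1),(3,2)\}$ and define $r_n$ by $r_0=r_1=1$, $r_{2n+1} = \frac{k+l+1}{k} r_{2n} - r_{2n-1}$, $r_{2n} = \frac{k+l+1}{l} r_{2n-1} - r_{2n-2}$. Then $r_{n+2}$ and $r_n$ are relatively prime for all $n \ge 0$. -/
private lemma cop2' (x : ℤ) (h : x % 2 = 1) : IsCoprime (2:ℤ) x :=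
  ⟨-(x/2), 1, by have := Int.mul_ediv_add_emod x 2; linarith⟩

private lemma cop3' (x : ℤ) (h : x % 3 = 1 ∨ x % 3 = 2) : IsCoprime (3:ℤ) x := by
  rcases h with h | h
  · exact ⟨-(x/3), 1, by have := Int.mul_ediv_add_emod x 3; linarith⟩
  · exact ⟨(x/3)+1, -1, by have := Int.mul_ediv_add_emod x 3; linarith⟩

private lemma key' (r : ℕ → ℤ) (h0 : r 0 = 1) (h1 : r 1 = 1)
    (hrec : ∀ n, ∃ c : ℤ, IsCoprime c (r n) ∧ r (n+2) = c * r (n+1) - r n) :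
    ∀ n, IsCoprime (r (n+2)) (r n) := by
  have adj : ∀ n, IsCoprime (r (n+1)) (r n) := by
    intro n
    induction n with
    | zero => rw [h0, h1]; exact isCoprime_one_left
    | succ m ih =>
      obtain ⟨c, -, hc⟩ := hrec m
      have h2 : r (m+1+1) = -r m + r (m+1) * c := by
        rw [show m+1+1 = m+2 by omega, hc]; ring
      rw [h2]
      exact ih.symm.neg_left.add_mul_left_left c
  intro n
  obtain ⟨c, hcop, hc⟩ := hrec n
  have h2 : r (n+2) = c * r (n+1) + r n * (-1) := by rw [hc]; ring
  rw [h2]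
  exact (hcop.mul_left (adj n)).add_mul_left_left (-1)

theorem stmt_8 (k l : ℕ)
    (hkl : (k, l) = (1, 1) ∨ (k, l) = (2, 1) ∨ (k, l) = (3, 2))
    (r : ℕ → ℤ) (h0 : r 0 = 1) (h1 : r 1 = 1)
    (hodd : ∀ n, r (2 * n + 3) = (((k + l + 1) / k : ℕ) : ℤ) * r (2 * n + 2) - r (2 * n + 1))
    (heven : ∀ n, r (2 * n + 2) = (((k + l + 1) / l : ℕ) : ℤ) * r (2 * n + 1) - r (2 * n)) :
    ∀ n, IsCoprime (r (n + 2)) (r n) := by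
  rcases hkl with hkl | hkl | hkl <;>
    (simp only [Prod.mk.injEq] at hkl) <;> obtain ⟨hk, hl⟩ := hkl <;> subst hk <;> subst hl
  · -- case (1,1): both coefficients are 3
    have ho : ∀ n, r (2*n+3) = 3 * r (2*n+2) - r (2*n+1) := by
      intro n; have := hodd n; norm_num at this; exact this
    have he : ∀ n, r (2*n+2) = 3 * r (2*n+1) - r (2*n) := by
      intro n; have := heven n; norm_num at this; exact this
    have hmod : ∀ m, (r (2*m) % 3 = 1 ∨ r (2*m) % 3 = 2) ∧
        (r (2*m+1) % 3 = 1 ∨ r (2*m+1) % 3 = 2) := by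
      intro m
      induction m with
      | zero => constructor <;> simp [h0, h1]
      | succ m ih =>
        have h2 := he m
        have h3 := ho m
        rw [show 2*(m+1) = 2*m+2 by omega, show 2*m+2+1 = 2*m+3 by omega]
        obtain ⟨ih1, ih2⟩ := ih
        constructor <;> omega
    apply key' r h0 h1
    intro n
    rcases Nat.even_or_odd n with ⟨m, rfl⟩ | ⟨m, rfl⟩
    · refine ⟨3, cop3' _ ?_, ?_⟩
      · have := (hmod m).1; rwa [two_mul] at this
      · have := he m; rw [two_mul m] at this
        rw [show m+m+2 = m+m+1+1 by omega] at this
        exact this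
    · refine ⟨3, cop3' _ (hmod m).2, ?_⟩
      have := ho m
      rw [show 2*m+1+2 = 2*m+3 by omega, show 2*m+1+1 = 2*m+2 by omega]
      exact this
  · -- case (2,1): coefficients 4 (even step) and 2 (odd step); all r n odd
    have ho : ∀ n, r (2*n+3) = 2 * r (2*n+2) - r (2*n+1) := by
      intro n; have := hodd n; norm_num at this; exact this
    have he : ∀ n, r (2*n+2) = 4 * r (2*n+1) - r (2*n) := by
      intro n; have := heven n; norm_num at this; exact this
    have hmod : ∀ m, r (2*m) % 2 = 1 ∧ r (2*m+1) % 2 = 1 := by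
      intro m
      induction m with
      | zero => constructor <;> simp [h0, h1]
      | succ m ih =>
        have h2 := he m
        have h3 := ho m
        rw [show 2*(m+1) = 2*m+2 by omega, show 2*m+2+1 = 2*m+3 by omega]
        obtain ⟨ih1, ih2⟩ := ih
        constructor <;> omega
    apply key' r h0 h1
    intro n
    rcases Nat.even_or_odd n with ⟨m, rfl⟩ | ⟨m, rfl⟩
    · refine ⟨4, ?_, ?_⟩
      · have h2 : IsCoprime (2:ℤ) (r (m+m)) := by
          apply cop2'; have := (hmod m).1; rwa [two_mul] at this
        have := h2.mul_left h2; norm_num at this; exact this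
      · have := he m; rw [two_mul m] at this
        rw [show m+m+2 = m+m+1+1 by omega] at this
        exact this
    · refine ⟨2, cop2' _ (hmod m).2, ?_⟩
      have := ho m
      rw [show 2*m+1+2 = 2*m+3 by omega, show 2*m+1+1 = 2*m+2 by omega]
      exact this
  · -- case (3,2): coefficients 3 (even step) and 2 (odd step)
    have ho : ∀ n, r (2*n+3) = 2 * r (2*n+2) - r (2*n+1) := by
      intro n; have := hodd n; norm_num at this; exact this
    have he : ∀ n, r (2*n+2) = 3 * r (2*n+1) - r (2*n) := by
      intro n; have := heven n; norm_num at this; exact this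
    have hmeven : ∀ m, r (2*m) % 3 = 1 ∨ r (2*m) % 3 = 2 := by
      intro m
      induction m with
      | zero => simp [h0]
      | succ m ih =>
        have h2 := he m
        rw [show 2*(m+1) = 2*m+2 by omega]
        omega
    have hmodd : ∀ m, r (2*m+1) % 2 = 1 := by
      intro m
      induction m with
      | zero => simp [h1]
      | succ m ih =>
        have h3 := ho m
        rw [show 2*(m+1)+1 = 2*m+3 by omega]
        omega
    apply key' r h0 h1
    intro n
    rcases Nat.even_or_odd n with ⟨m, rfl⟩ | ⟨m, rfl⟩
    · refine ⟨3, cop3' _ ?_, ?_⟩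
      · have := hmeven m; rwa [two_mul] at this
      · have := he m; rw [two_mul m] at this
        rw [show m+m+2 = m+m+1+1 by omega] at this
        exact this
    · refine ⟨2, cop2' _ (hmodd m), ?_⟩
      have := ho m
      rw [show 2*m+1+2 = 2*m+3 by omega, show 2*m+1+1 = 2*m+2 by omega]
      exact this
end

section
/- Let $(k,l) \in \{(1,1),(2,1),(3,2)\}$. If positive integers $p,q$ satisfy $kp^2 - (k+l+1)pq + lq^2 + 1 = 0$, then $p' := (lq^2+1)/(kp)$ and $q' := (kp^2+1)/(lq)$ are positive integers, and $(p',q)$ and $(p,q')$ also satisfy the same equation. -/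
theorem aux_stmt_11 (k l m n p q : ℤ) (hk : 0 < k) (hl : 0 < l)
    (hm : k * m = k + l + 1) (hn : l * n = k + l + 1)
    (hp : 0 < p) (hq : 0 < q)
    (h : k * p ^ 2 - (k + l + 1) * p * q + l * q ^ 2 + 1 = 0) :
    (k * p ∣ l * q ^ 2 + 1) ∧ (l * q ∣ k * p ^ 2 + 1) ∧
    (0 < (l * q ^ 2 + 1) / (k * p)) ∧ (0 < (k * p ^ 2 + 1) / (l * q)) ∧
    (k * ((l * q ^ 2 + 1) / (k * p)) ^ 2
      - (k + l + 1) * ((l * q ^ 2 + 1) / (k * p)) * q + l * q ^ 2 + 1 = 0) ∧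
    (k * p ^ 2 - (k + l + 1) * p * ((k * p ^ 2 + 1) / (l * q))
      + l * ((k * p ^ 2 + 1) / (l * q)) ^ 2 + 1 = 0) := by
  have e1 : l * q ^ 2 + 1 = k * p * (m * q - p) := by linear_combination h - p * q * hm
  have e2 : k * p ^ 2 + 1 = l * q * (n * p - q) := by linear_combination h - p * q * hn
  have hkp : 0 < k * p := mul_pos hk hp
  have hlq : 0 < l * q := mul_pos hl hq
  have d1 : (l * q ^ 2 + 1) / (k * p) = m * q - p := by
    rw [e1, Int.mul_ediv_cancel_left _ hkp.ne']
  have d2 : (k * p ^ 2 + 1) / (l * q) = n * p - q := by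
    rw [e2, Int.mul_ediv_cancel_left _ hlq.ne']
  have pos1 : 0 < m * q - p := by
    have h1 : 0 < k * p * (m * q - p) := by rw [← e1]; positivity
    nlinarith
  have pos2 : 0 < n * p - q := by
    have h1 : 0 < l * q * (n * p - q) := by rw [← e2]; positivity
    nlinarith
  exact ⟨⟨m * q - p, e1⟩, ⟨n * p - q, e2⟩, by rw [d1]; exact pos1, by rw [d2]; exact pos2,
    by rw [d1]; linear_combination h + (m * q ^ 2 - 2 * p * q) * hm,
    by rw [d2]; linear_combination h + (n * p ^ 2 - 2 * p * q) * hn⟩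

theorem stmt_11 (k l : ℤ)
    (hkl : (k, l) = (1, 1) ∨ (k, l) = (2, 1) ∨ (k, l) = (3, 2))
    (p q : ℤ) (hp : 0 < p) (hq : 0 < q)
    (h : k * p ^ 2 - (k + l + 1) * p * q + l * q ^ 2 + 1 = 0) :
    (k * p ∣ l * q ^ 2 + 1) ∧ (l * q ∣ k * p ^ 2 + 1) ∧
    (0 < (l * q ^ 2 + 1) / (k * p)) ∧ (0 < (k * p ^ 2 + 1) / (l * q)) ∧
    (k * ((l * q ^ 2 + 1) / (k * p)) ^ 2
      - (k + l + 1) * ((l * q ^ 2 + 1) / (k * p)) * q + l * q ^ 2 + 1 = 0) ∧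
    (k * p ^ 2 - (k + l + 1) * p * ((k * p ^ 2 + 1) / (l * q))
      + l * ((k * p ^ 2 + 1) / (l * q)) ^ 2 + 1 = 0) := by
  rcases hkl with hkl | hkl | hkl <;>
    obtain ⟨hk, hl⟩ := Prod.mk.injEq .. ▸ hkl <;> subst hk hl
  · exact aux_stmt_11 1 1 3 3 p q (by norm_num) (by norm_num) (by ring) (by ring) hp hq h
  · exact aux_stmt_11 2 1 2 4 p q (by norm_num) (by norm_num) (by ring) (by ring) hp hq h
  · exact aux_stmt_11 3 2 2 3 p q (by norm_num) (by norm_num) (by ring) (by ring) hp hq h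
end

section
/- Let $k \ge l \ge 1$ be integers and suppose positive integers $p,q$ satisfy $kp^2 - (k+l+1)pq + lq^2 + 1 = 0$ with $kp \mid lq^2+1$ and $lq \mid kp^2+1$. If $p \le (lq^2+1)/(kp)$ and $q \le (kp^2+1)/(lq)$, then $(k,l,p,q) \in \{(1,1,1,1),(2,1,1,1),(3,2,1,1),(5,1,1,2)\}$. -/
set_option maxHeartbeats 2000000 in
theorem stmt_12 (k l p q : ℤ) (hl : 1 ≤ l) (hkl : l ≤ k) (hp : 0 < p) (hq : 0 < q)
    (h : k * p ^ 2 - (k + l + 1) * p * q + l * q ^ 2 + 1 = 0)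
    (hdvd1 : k * p ∣ l * q ^ 2 + 1) (hdvd2 : l * q ∣ k * p ^ 2 + 1)
    (hp' : p ≤ (l * q ^ 2 + 1) / (k * p)) (hq' : q ≤ (k * p ^ 2 + 1) / (l * q)) :
    (k, l, p, q) = (1, 1, 1, 1) ∨ (k, l, p, q) = (2, 1, 1, 1) ∨
    (k, l, p, q) = (3, 2, 1, 1) ∨ (k, l, p, q) = (5, 1, 1, 2) := by
  have hk1 : (1:ℤ) ≤ k := hl.trans hkl
  have hkp : 0 < k * p := mul_pos (by linarith) hp
  have hlq : 0 < l * q := mul_pos (by linarith) hq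
  rw [Int.le_ediv_iff_mul_le hkp] at hp'
  rw [Int.le_ediv_iff_mul_le hlq] at hq'
  have h1 : k * (p*p) ≤ l * (q*q) + 1 := by nlinarith [hp']
  have h2 : l * (q*q) ≤ k * (p*p) + 1 := by nlinarith [hq']
  have hh : k*(p*p) - (k+l+1)*(p*q) + l*(q*q) + 1 = 0 := by linear_combination h
  have hdvd1' : k*p ∣ l*(q*q)+1 := by
    rw [show l*(q*q)+1 = l*q^2+1 by ring]; exact hdvd1
  have hdvd2' : l*q ∣ k*(p*p)+1 := by
    rw [show k*(p*p)+1 = k*p^2+1 by ring]; exact hdvd2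
  rcases lt_trichotomy (k*(p*p)) (l*(q*q)) with hd | hd | hd
  · -- lq² = kp² + 1, so kp ∣ 2
    have hd' : l*(q*q) = k*(p*p) + 1 := le_antisymm h2 (by linarith)
    have hdd : k*p ∣ 2 := by
      have h3 : k*p ∣ k*(p*p) + 2 := by
        have := hdvd1'; rw [hd'] at this
        rw [show k*(p*p)+2 = k*(p*p)+1+1 by ring]; exact this
      exact (Int.dvd_add_right ⟨p, by ring⟩).mp h3
    have hkp2 : k*p ≤ 2 := Int.le_of_dvd two_pos hdd
    have pb : p ≤ 2 := by nlinarith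
    have kb : k ≤ 2 := by nlinarith
    have hA : k*(p*p) ≤ 4 := by nlinarith
    have qq : q*q ≤ 5 := by nlinarith
    have qb : q ≤ 2 := by nlinarith
    have lb : l ≤ 5 := by nlinarith
    interval_cases k <;> interval_cases l <;> interval_cases p <;> interval_cases q <;> first | omega | simp
  · -- kp² = lq², so kp ∣ 1
    have hdd : k*p ∣ 1 := by
      have h3 : k*p ∣ k*(p*p) + 1 := by rw [← hd] at hdvd1'; exact hdvd1'
      exact (Int.dvd_add_right ⟨p, by ring⟩).mp h3
    have hkp2 : k*p ≤ 1 := Int.le_of_dvd one_pos hdd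
    have pb : p ≤ 1 := by nlinarith
    have kb : k ≤ 1 := by nlinarith
    have hA : k*(p*p) ≤ 1 := by nlinarith
    have qq : q*q ≤ 1 := by nlinarith
    have qb : q ≤ 1 := by nlinarith
    have lb : l ≤ 1 := by nlinarith
    interval_cases k <;> interval_cases l <;> interval_cases p <;> interval_cases q <;> first | omega | simp
  · -- kp² = lq² + 1, so lq ∣ 2
    have hd' : k*(p*p) = l*(q*q) + 1 := le_antisymm h1 (by linarith)
    have hdd : l*q ∣ 2 := by
      have h3 : l*q ∣ l*(q*q) + 2 := by
        have := hdvd2'; rw [hd'] at this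
        rw [show l*(q*q)+2 = l*(q*q)+1+1 by ring]; exact this
      exact (Int.dvd_add_right ⟨q, by ring⟩).mp h3
    have hlq2 : l*q ≤ 2 := Int.le_of_dvd two_pos hdd
    have qb : q ≤ 2 := by nlinarith
    have lb : l ≤ 2 := by nlinarith
    have hB : l*(q*q) ≤ 4 := by nlinarith
    have pp : p*p ≤ 5 := by nlinarith
    have pb : p ≤ 2 := by nlinarith
    have kb : k ≤ 5 := by nlinarith
    interval_cases k <;> interval_cases l <;> interval_cases p <;> interval_cases q <;> first | omega | simp
end

section
/- For $(k,l)=(2,1)$: positive integers $(p,q)$ satisfy $2p^2 - 4pq + q^2 + 1 = 0$ if and only if $(p,q) = (r_{2n\pm 1}, r_{2n})$ for some $n \ge 0$, where $r_0 = r_1 = 1$, $r_{2n+1} = 2r_{2n} - r_{2n-1}$, $r_{2n} = 4 r_{2n-1} - r_{2n-2}$, and $r_{-1} = 1$. -/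
theorem stmt_14 (r : ℕ → ℤ) (h0 : r 0 = 1) (h1 : r 1 = 1)
    (hodd : ∀ n, r (2 * n + 3) = 2 * r (2 * n + 2) - r (2 * n + 1))
    (heven : ∀ n, r (2 * n + 2) = 4 * r (2 * n + 1) - r (2 * n))
    (p q : ℤ) (hp : 0 < p) (hq : 0 < q) :
    2 * p ^ 2 - 4 * p * q + q ^ 2 + 1 = 0 ↔
      ∃ n : ℕ, (p = r (2 * n + 1) ∧ q = r (2 * n)) ∨
               (p = r (2 * n - 1) ∧ q = r (2 * n)) := by
  -- monotonicity / positivity of r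
  have mono : ∀ n, 0 < r (2*n) ∧ r (2*n) ≤ r (2*n+1) ∧ r (2*n+1) ≤ r (2*n+2) := by
    intro n
    induction n with
    | zero =>
      have e2 := heven 0
      norm_num at e2 ⊢
      rw [h0, h1] at *
      constructor
      · norm_num
      constructor
      · norm_num
      · rw [e2]; norm_num
    | succ m ih =>
      obtain ⟨hpos, hle1, hle2⟩ := ih
      have e1 := hodd m
      have e2 := heven (m+1)
      have idx1 : 2*(m+1) = 2*m+2 := by ring
      have idx2 : 2*(m+1)+1 = 2*m+3 := by ring
      have idx3 : 2*(m+1)+2 = 2*m+4 := by ring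
      rw [idx3, idx2, idx1] at e2
      rw [idx1, show 2*m+2+1 = 2*m+3 by omega, show 2*m+2+2 = 2*m+4 by omega]
      refine ⟨by linarith, by linarith, ?_⟩
      rw [e2]; linarith
  -- reverse direction key identity
  have key : ∀ n, (2 * (r (2*n+1)) ^ 2 - 4 * (r (2*n+1)) * (r (2*n)) + (r (2*n)) ^ 2 + 1 = 0)
      ∧ (2 * (r (2*n+1)) ^ 2 - 4 * (r (2*n+1)) * (r (2*n+2)) + (r (2*n+2)) ^ 2 + 1 = 0) := by
    intro n
    induction n with
    | zero =>
      norm_num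
      rw [h0, h1, heven 0, h0, h1]
      norm_num
    | succ m ih =>
      obtain ⟨ih1, ih2⟩ := ih
      have e1 := hodd m
      have e2 := heven (m+1)
      have idx1 : 2*(m+1) = 2*m+2 := by ring
      have idx2 : 2*(m+1)+1 = 2*m+3 := by ring
      have idx3 : 2*(m+1)+2 = 2*m+4 := by ring
      rw [idx3, idx2, idx1] at e2
      rw [idx1, show 2*m+2+1 = 2*m+3 by omega, show 2*m+2+2 = 2*m+4 by omega]
      constructor
      · rw [e1]; linear_combination ih2
      · rw [e2, e1]; linear_combination ih2
  constructor
  · -- forward: descent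
    intro heq0
    have main : ∀ N : ℕ, ∀ p q : ℤ, 0 < p → 0 < q → p + q ≤ (N : ℤ) →
        2 * p ^ 2 - 4 * p * q + q ^ 2 + 1 = 0 →
        ∃ n : ℕ, (p = r (2 * n + 1) ∧ q = r (2 * n)) ∨
                 (p = r (2 * n - 1) ∧ q = r (2 * n)) := by
      intro N
      induction N with
      | zero => intro p q hp hq hle _; exfalso; push_cast at hle; linarith
      | succ N ih =>
        intro p q hp hq hle heq
        rcases lt_trichotomy p q with hlt | hpq | hgt
        · -- p < q : jump q ↦ 4p - q
          have h2 : (4*p - q) * q = 2*p^2 + 1 := by linear_combination -heq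
          have hQpos : 0 < 4*p - q := by nlinarith
          have hQle : 4*p - q ≤ p := by
            by_contra h
            push_neg at h
            nlinarith [mul_nonneg (by linarith : (0:ℤ) ≤ 3*p - 1 - q)
              (by linarith : (0:ℤ) ≤ q - p - 1)]
          have heq' : 2*p^2 - 4*p*(4*p-q) + (4*p-q)^2 + 1 = 0 := by linear_combination heq
          rcases eq_or_lt_of_le hQle with hQeq | hQlt
          · -- 4p - q = p ⇒ p = 1, q = 3
            have hp1 : p = 1 := by nlinarith
            have hq3 : q = 3 := by linarith
            refine ⟨1, Or.inr ⟨?_, ?_⟩⟩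
            · norm_num; rw [h1, hp1]
            · have e := heven 0
              norm_num at e ⊢
              rw [e, h0, h1, hq3]; norm_num
          · obtain ⟨n, hc⟩ := ih p (4*p-q) hp hQpos (by push_cast at hle ⊢; linarith) heq'
            rcases hc with ⟨hP, hQ⟩ | ⟨hP, hQ⟩
            · -- p = r(2n+1), 4p-q = r(2n) ⇒ answer n+1, second disjunct
              refine ⟨n+1, Or.inr ⟨?_, ?_⟩⟩
              · have idx : 2*(n+1)-1 = 2*n+1 := by omega
                rw [idx]; exact hP
              · have idx : 2*(n+1) = 2*n+2 := by ring
                rw [idx, heven n, ← hP, ← hQ]; ring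
            · -- p = r(2n-1), 4p-q = r(2n) : contradiction with 4p-q < p
              exfalso
              rcases Nat.eq_zero_or_pos n with rfl | hn
              · norm_num at hP hQ
                rw [h0] at hP hQ
                linarith
              · obtain ⟨m, rfl⟩ : ∃ m, n = m + 1 := ⟨n-1, by omega⟩
                have idx1 : 2*(m+1)-1 = 2*m+1 := by omega
                have idx2 : 2*(m+1) = 2*m+2 := by ring
                rw [idx1] at hP
                rw [idx2] at hQ
                have := (mono m).2.2
                linarith
        · -- p = q ⇒ p = q = 1
          have hp1 : p = 1 := by nlinarith
          refine ⟨0, Or.inl ⟨?_, ?_⟩⟩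
          · norm_num; rw [h1, hp1]
          · norm_num; rw [h0, ← hpq, hp1]
        · -- q < p : jump p ↦ 2q - p
          have h2 : 2 * (2*q - p) * p = q^2 + 1 := by linear_combination -heq
          have hPpos : 0 < 2*q - p := by nlinarith
          have hPlt : 2*q - p < q := by nlinarith
          have heq' : 2*(2*q-p)^2 - 4*(2*q-p)*q + q^2 + 1 = 0 := by linear_combination heq
          obtain ⟨n, hc⟩ := ih (2*q-p) q hPpos hq (by push_cast at hle ⊢; linarith) heq'
          rcases hc with ⟨hP, hQ⟩ | ⟨hP, hQ⟩
          · -- 2q-p = r(2n+1), q = r(2n) : contradiction (r(2n) ≤ r(2n+1) but 2q-p < q)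
            exfalso
            have := (mono n).2.1
            rw [← hP, ← hQ] at this
            linarith
          · -- 2q-p = r(2n-1), q = r(2n)
            rcases Nat.eq_zero_or_pos n with rfl | hn
            · exfalso
              norm_num at hP hQ
              rw [h0] at hP hQ
              linarith
            · obtain ⟨m, rfl⟩ : ∃ m, n = m + 1 := ⟨n-1, by omega⟩
              have idx1 : 2*(m+1)-1 = 2*m+1 := by omega
              have idx2 : 2*(m+1) = 2*m+2 := by ring
              rw [idx1] at hP
              rw [idx2] at hQ
              refine ⟨m+1, Or.inl ⟨?_, ?_⟩⟩
              · have idx3 : 2*(m+1)+1 = 2*m+3 := by ring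
                rw [idx3, hodd m, ← hP, ← hQ]; ring
              · have idx2' : 2*(m+1) = 2*m+2 := by ring
                rw [idx2']; exact hQ
    exact main (p+q).toNat p q hp hq (Int.self_le_toNat _) heq0
  · rintro ⟨n, ⟨hp', hq'⟩ | ⟨hp', hq'⟩⟩
    · rw [hp', hq']; exact (key n).1
    · rcases Nat.eq_zero_or_pos n with rfl | hn
      · norm_num at hp' hq'
        rw [hp', hq', h0]; norm_num
      · obtain ⟨m, rfl⟩ : ∃ m, n = m + 1 := ⟨n-1, by omega⟩
        have idx1 : 2*(m+1)-1 = 2*m+1 := by omega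
        have idx2 : 2*(m+1) = 2*m+2 := by ring
        rw [idx1] at hp'
        rw [idx2] at hq'
        rw [hp', hq']
        exact (key m).2
end

section
/- For $(k,l)=(3,2)$: positive integers $(p,q)$ satisfy $3p^2 - 6pq + 2q^2 + 1 = 0$ if and only if $(p,q) = (r_{2n\pm 1}, r_{2n})$ for some $n \ge 0$, where $r_{-1} = r_0 = r_1 = 1$, $r_{2n+1} = 2 r_{2n} - r_{2n-1}$, $r_{2n} = 3 r_{2n-1} - r_{2n-2}$. -/
/-!
Writing `s n = r (2 n)` and `t n = r (2 n + 1) - r (2 n)`, the recurrences become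
`(s, t) ↦ (2 s + 3 t, s + 2 t)`, i.e. multiplication by `2 + √3` in `ℤ[√3]`, so
`s n + t n √3 = (2 + √3) ^ n`. The equation is `q ^ 2 - 3 (p - q) ^ 2 = 1`, a Pell equation with
fundamental solution `2 + √3`, whose solutions with `q > 0` are `q = s n`, `p - q = ± t n`.
-/

namespace Pell

open Solution₁

theorem Solution₁.y_pow_nonneg {d : ℤ} {a : Solution₁ d} (hax : 0 < a.x) (hay : 0 < a.y) (n : ℕ) :
    0 ≤ (a ^ n).y := by
  cases n with
  | zero => simp [y_one]
  | succ n => exact (y_pow_succ_pos hax hay n).le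

-- A solution with `x > 1` has `y ≠ 0`, hence `x ^ 2 ≥ 1 + d = a ^ 2`.
theorem isFundamental_mk_one {d a : ℤ} (ha : 1 < a) (h : a ^ 2 - d * 1 ^ 2 = 1) :
    IsFundamental (Solution₁.mk a 1 h) := by
  refine ⟨by simpa using ha, by simp, fun {b} hb => ?_⟩
  have hby : 1 ≤ b.y ^ 2 := by
    have := sq_pos_of_ne_zero (y_ne_zero_of_one_lt_x hb)
    omega
  have hd : 0 < d := by nlinarith
  have := b.prop
  rw [x_mk]
  nlinarith

theorem IsFundamental.sq_sub_mul_sq_eq_one_iff {d : ℤ} {a₁ : Solution₁ d} (h : IsFundamental a₁)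
    {x y : ℤ} (hx : 0 < x) :
    x ^ 2 - d * y ^ 2 = 1 ↔ ∃ n : ℕ, x = (a₁ ^ n).x ∧ |y| = (a₁ ^ n).y := by
  constructor
  · intro hxy
    obtain ⟨n, hn⟩ := h.eq_pow_of_nonneg (a := Solution₁.mk x |y| (by rwa [sq_abs]))
      (by rwa [x_mk]) (by rw [y_mk]; positivity)
    exact ⟨n, by rw [← hn, x_mk], by rw [← hn, y_mk]⟩
  · rintro ⟨n, rfl, hy⟩
    rw [← sq_abs y, hy]
    exact (a₁ ^ n).prop

def twoAddSqrtThree : Solution₁ 3 := Solution₁.mk 2 1 (by norm_num)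

theorem isFundamental_twoAddSqrtThree : IsFundamental twoAddSqrtThree :=
  isFundamental_mk_one one_lt_two _

end Pell

open Pell Solution₁

theorem r_two_mul_eq_pow_twoAddSqrtThree (r : ℕ → ℤ) (h0 : r 0 = 1) (h1 : r 1 = 1)
    (hodd : ∀ n, r (2 * n + 3) = 2 * r (2 * n + 2) - r (2 * n + 1))
    (heven : ∀ n, r (2 * n + 2) = 3 * r (2 * n + 1) - r (2 * n)) (n : ℕ) :
    r (2 * n) = (twoAddSqrtThree ^ n).x ∧
      r (2 * n + 1) = (twoAddSqrtThree ^ n).x + (twoAddSqrtThree ^ n).y := by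
  induction n with
  | zero => simp [h0, h1, x_one, y_one]
  | succ n ih =>
    have hx : (twoAddSqrtThree ^ (n + 1)).x =
        2 * (twoAddSqrtThree ^ n).x + 3 * (twoAddSqrtThree ^ n).y := by
      rw [pow_succ, x_mul, twoAddSqrtThree, x_mk, y_mk]; ring
    have hy : (twoAddSqrtThree ^ (n + 1)).y =
        (twoAddSqrtThree ^ n).x + 2 * (twoAddSqrtThree ^ n).y := by
      rw [pow_succ, y_mul, twoAddSqrtThree, x_mk, y_mk]; ring
    rw [show 2 * (n + 1) = 2 * n + 2 by ring, hx, hy, heven, hodd, heven, ih.1, ih.2]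
    constructor <;> ring

theorem r_two_mul_sub_one_eq_pow_twoAddSqrtThree (r : ℕ → ℤ) (h0 : r 0 = 1) (h1 : r 1 = 1)
    (hodd : ∀ n, r (2 * n + 3) = 2 * r (2 * n + 2) - r (2 * n + 1))
    (heven : ∀ n, r (2 * n + 2) = 3 * r (2 * n + 1) - r (2 * n)) (n : ℕ) :
    r (2 * n - 1) = (twoAddSqrtThree ^ n).x - (twoAddSqrtThree ^ n).y := by
  cases n with
  -- `2 * 0 - 1 = 0` in `ℕ`, matching the paper's `r (-1) = r 0 = 1`
  | zero => simp [h0, x_one, y_one]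
  | succ n =>
    have h := r_two_mul_eq_pow_twoAddSqrtThree r h0 h1 hodd heven
    have h_step := hodd n
    rw [show 2 * n + 2 = 2 * (n + 1) by ring, show 2 * n + 3 = 2 * (n + 1) + 1 by ring,
      (h (n + 1)).1, (h (n + 1)).2] at h_step
    rw [show 2 * (n + 1) - 1 = 2 * n + 1 by omega]
    linarith

theorem stmt_15_general (r : ℕ → ℤ) (h0 : r 0 = 1) (h1 : r 1 = 1)
    (hodd : ∀ n, r (2 * n + 3) = 2 * r (2 * n + 2) - r (2 * n + 1))
    (heven : ∀ n, r (2 * n + 2) = 3 * r (2 * n + 1) - r (2 * n))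
    (p q : ℤ) (hq : 0 < q) :
    3 * p ^ 2 - 6 * p * q + 2 * q ^ 2 + 1 = 0 ↔
      ∃ n : ℕ, (p = r (2 * n + 1) ∧ q = r (2 * n)) ∨
               (p = r (2 * n - 1) ∧ q = r (2 * n)) := by
  have hpell : 3 * p ^ 2 - 6 * p * q + 2 * q ^ 2 + 1 = 0 ↔ q ^ 2 - 3 * (p - q) ^ 2 = 1 := by
    constructor <;> intro h <;> linarith
  rw [hpell, isFundamental_twoAddSqrtThree.sq_sub_mul_sq_eq_one_iff hq]
  refine exists_congr fun n => ?_
  have hy_nonneg := y_pow_nonneg (a := twoAddSqrtThree) (by simp [twoAddSqrtThree])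
    (by simp [twoAddSqrtThree]) n
  obtain ⟨h_even, h_odd⟩ := r_two_mul_eq_pow_twoAddSqrtThree r h0 h1 hodd heven n
  rw [h_even, h_odd, r_two_mul_sub_one_eq_pow_twoAddSqrtThree r h0 h1 hodd heven n,
    abs_eq hy_nonneg]
  omega

theorem stmt_15 (r : ℕ → ℤ) (h0 : r 0 = 1) (h1 : r 1 = 1)
    (hodd : ∀ n, r (2 * n + 3) = 2 * r (2 * n + 2) - r (2 * n + 1))
    (heven : ∀ n, r (2 * n + 2) = 3 * r (2 * n + 1) - r (2 * n))
    (p q : ℤ) (hp : 0 < p) (hq : 0 < q) :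
    3 * p ^ 2 - 6 * p * q + 2 * q ^ 2 + 1 = 0 ↔
      ∃ n : ℕ, (p = r (2 * n + 1) ∧ q = r (2 * n)) ∨
               (p = r (2 * n - 1) ∧ q = r (2 * n)) :=
  stmt_15_general r h0 h1 hodd heven p q hq
end
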